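/- Let I=⟨A,∅,R,R?⟩ be an AtIAF and S⊆A a set of arguments such that S is not stable-ad with respect to I. Then for every attack r=(a,b)∈R? such that a∉S or b∉S: r∈RE⁻(I,S,(ad,true)) if and only if a∉S⁻_I, a∉S⁺_I, and b∈S. -/

import Mathlib

universe u

/-- An abstract argumentation framework: a set of arguments with an attack relation. -/
structure AF (α : Type u) where
  args : Set α
  att : Set (α × α)

namespace AF

variable {α : Type u}

/-- `S⁺_F`: arguments attacked by `S`. -/
def plusSet (F : AF α) (S : Set α) : Set α := {a | a ∈ F.args ∧ ∃ b ∈ S, (b, a) ∈ F.att}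

/-- `S⁻_F`: arguments attacking `S`. -/
def minusSet (F : AF α) (S : Set α) : Set α := {a | a ∈ F.args ∧ ∃ b ∈ S, (a, b) ∈ F.att}

/-- `S` is conflict-free in `F`. -/
def confFree (F : AF α) (S : Set α) : Prop := S ∩ F.plusSet S = ∅

/-- `S` defends `a` in `F`: every attacker of `a` is attacked by `S`. -/
def defends (F : AF α) (S : Set α) (a : α) : Prop := ∀ b, (b, a) ∈ F.att → b ∈ F.plusSet S

/-- The characteristic function `Γ_F(S)`: arguments defended by `S`. -/
def Γ (F : AF α) (S : Set α) : Set α := {a | a ∈ F.args ∧ F.defends S a}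

/-- Admissible: conflict-free and self-defending. -/
def isAd (F : AF α) (S : Set α) : Prop := S ⊆ F.args ∧ F.confFree S ∧ S ⊆ F.Γ S

/-- Stable: conflict-free and attacking exactly the outside. -/
def isSt (F : AF α) (S : Set α) : Prop := S ⊆ F.args ∧ F.confFree S ∧ F.plusSet S = F.args \ S

/-- Complete: admissible and containing all defended arguments. -/
def isCo (F : AF α) (S : Set α) : Prop := F.isAd S ∧ F.Γ S ⊆ S

/-- Grounded: ⊆-minimal complete. -/
def isGr (F : AF α) (S : Set α) : Prop := F.isCo S ∧ ∀ T, F.isCo T → T ⊆ S → T = S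

/-- Preferred: ⊆-maximal admissible. -/
def isPr (F : AF α) (S : Set α) : Prop := F.isAd S ∧ ∀ T, F.isAd T → S ⊆ T → S = T

end AF

/-- The five common semantics. -/
inductive Sem : Type
  | ad | st | co | gr | pr
deriving DecidableEq

/-- `S` is a `σ`-extension of `F`. -/
def extOf {α : Type u} : Sem → AF α → Set α → Prop
  | .ad => AF.isAd
  | .st => AF.isSt
  | .co => AF.isCo
  | .gr => AF.isGr
  | .pr => AF.isPr

/-- An incomplete argumentation framework (data part). -/
structure IAF (α : Type u) where
  A : Set α
  Aq : Set α
  R : Set (α × α)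
  Rq : Set (α × α)

namespace IAF

variable {α : Type u}

/-- Well-formedness: `A`,`A?` disjoint; `R`,`R?` disjoint subsets of `(A∪A?)×(A∪A?)`. -/
def WF (I : IAF α) : Prop :=
  Disjoint I.A I.Aq ∧ Disjoint I.R I.Rq ∧
  I.R ⊆ (I.A ∪ I.Aq) ×ˢ (I.A ∪ I.Aq) ∧
  I.Rq ⊆ (I.A ∪ I.Aq) ×ˢ (I.A ∪ I.Aq)

/-- `cert(I)`: the AF projected on the certain part. -/
def cert (I : IAF α) : AF α := ⟨I.A, I.R ∩ I.A ×ˢ I.A⟩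

/-- `I'` is a partial completion of `I`. -/
def PartOf (I' I : IAF α) : Prop :=
  I'.WF ∧ I.A ⊆ I'.A ∧ I'.A ⊆ I.A ∪ I.Aq ∧
  I.R ∩ (I'.A ∪ I'.Aq) ×ˢ (I'.A ∪ I'.Aq) ⊆ I'.R ∧
  I'.R ⊆ I.R ∪ I.Rq ∧ I'.Aq ⊆ I.Aq ∧ I'.Rq ⊆ I.Rq

/-- `F` is a completion of `I`. -/
def IsCompletion (I : IAF α) (F : AF α) : Prop := ∃ I' : IAF α, I'.PartOf I ∧ F = I'.cert

/-- `I + R₀` for a set of uncertain attacks. -/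
def addR (I : IAF α) (R0 : Set (α × α)) : IAF α := ⟨I.A, I.Aq, I.R ∪ R0, I.Rq \ R0⟩

/-- `I − R₀` for a set of uncertain attacks. -/
def subR (I : IAF α) (R0 : Set (α × α)) : IAF α := ⟨I.A, I.Aq, I.R, I.Rq \ R0⟩

/-- `I + A₀` for a set of uncertain arguments. -/
def addA (I : IAF α) (A0 : Set α) : IAF α := ⟨I.A ∪ A0, I.Aq \ A0, I.R, I.Rq⟩

/-- `I − A₀` for a set of uncertain arguments. -/
def subA (I : IAF α) (A0 : Set α) : IAF α :=
  ⟨I.A, I.Aq \ A0,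
   I.R \ {p | p ∈ I.R ∪ I.Rq ∧ (p.1 ∈ A0 ∨ p.2 ∈ A0)},
   I.Rq \ {p | p ∈ I.R ∪ I.Rq ∧ (p.1 ∈ A0 ∨ p.2 ∈ A0)}⟩

/-- `S⁺_I`. -/
def plusI (I : IAF α) (S : Set α) : Set α := {a | a ∈ I.A ∪ I.Aq ∧ ∃ b ∈ S, (b, a) ∈ I.R}

/-- `S⁻_I`. -/
def minusI (I : IAF α) (S : Set α) : Set α := {a | a ∈ I.A ∪ I.Aq ∧ ∃ b ∈ S, (a, b) ∈ I.R}

/-- `S^∼_I`. -/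
def simI (I : IAF α) (S : Set α) : Set α :=
  {a | a ∈ I.A ∪ I.Aq ∧ ∀ b ∈ S, (b, a) ∉ I.R ∪ I.Rq}

end IAF

/-- An element of an IAF: either an argument or an attack. -/
inductive Elem (α : Type u) : Type u
  | arg (a : α)
  | att (r : α × α)

/-- `e` is an uncertain element of `I`, i.e. `e ∈ A? ∪ R?`. -/
def IAF.isUnc {α : Type u} (I : IAF α) : Elem α → Prop
  | .arg a => a ∈ I.Aq
  | .att r => r ∈ I.Rq

/-- `I + {e}`. -/
def IAF.addE {α : Type u} (I : IAF α) : Elem α → IAF α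
  | .arg a => I.addA {a}
  | .att r => I.addR {r}

/-- `I − {e}`. -/
def IAF.subE {α : Type u} (I : IAF α) : Elem α → IAF α
  | .arg a => I.subA {a}
  | .att r => I.subR {r}

/-- `e` is the unique uncertain element of `I`, i.e. `A? ∪ R? = {e}`. -/
def onlyUnc {α : Type u} (I : IAF α) : Elem α → Prop
  | .arg a => I.Aq = {a} ∧ I.Rq = ∅
  | .att r => I.Aq = ∅ ∧ I.Rq = {r}

/-- A verification status: a semantics together with true/false. -/
abbrev VStatus := Sem × Bool

/-- `S` has verification status `j` in the AF `F`. -/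
def hasStatus {α : Type u} (F : AF α) (S : Set α) (j : VStatus) : Prop :=
  cond j.2 (extOf j.1 F S) (¬ extOf j.1 F S)

/-- `S` is stable-`j` w.r.t. `I`. -/
def IAF.stableJ {α : Type u} (I : IAF α) (S : Set α) (j : VStatus) : Prop :=
  ∀ F, I.IsCompletion F → hasStatus F S j

/-- `S` is stable-`σ` w.r.t. `I`. -/
def IAF.stableSem {α : Type u} (I : IAF α) (S : Set α) (σ : Sem) : Prop :=
  I.stableJ S (σ, true) ∨ I.stableJ S (σ, false)

/-- `RE⁺(I,S,j)`: uncertain elements whose addition is `j`-relevant for `S` w.r.t. `I`. -/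
def REplus {α : Type u} (I : IAF α) (S : Set α) (j : VStatus) : Set (Elem α) :=
  {e | I.isUnc e ∧ ∃ I' : IAF α, I'.PartOf I ∧ onlyUnc I' e ∧
    hasStatus (I'.addE e).cert S j ∧ ¬ hasStatus (I'.subE e).cert S j}

/-- `RE⁻(I,S,j)`: uncertain elements whose removal is `j`-relevant for `S` w.r.t. `I`. -/
def REminus {α : Type u} (I : IAF α) (S : Set α) (j : VStatus) : Set (Elem α) :=
  {e | I.isUnc e ∧ ∃ I' : IAF α, I'.PartOf I ∧ onlyUnc I' e ∧
    hasStatus (I'.subE e).cert S j ∧ ¬ hasStatus (I'.addE e).cert S j}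

/-- `e` is `σ`-irrelevant for `S` w.r.t. `I`. -/
def irrelevant {α : Type u} (I : IAF α) (S : Set α) (σ : Sem) (e : Elem α) : Prop :=
  e ∉ REplus I S (σ, true) ∧ e ∉ REminus I S (σ, true) ∧
  e ∉ REplus I S (σ, false) ∧ e ∉ REminus I S (σ, false)

/-- `PosVer_σ(I,S) = true`. -/
def PosVer {α : Type u} (σ : Sem) (I : IAF α) (S : Set α) : Prop :=
  ∃ F, I.IsCompletion F ∧ extOf σ F S

/-- `NecVer_σ(I,S) = true`. -/
def NecVer {α : Type u} (σ : Sem) (I : IAF α) (S : Set α) : Prop :=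
  ∀ F, I.IsCompletion F → extOf σ F S

/-- `SRE⁺(I,S,j)`: uncertain elements whose addition is strongly `j`-relevant. -/
def SREplus {α : Type u} (I : IAF α) (S : Set α) (j : VStatus) : Set (Elem α) :=
  {e | I.isUnc e ∧ ∀ I' : IAF α, I'.PartOf (I.subE e) → ¬ I'.stableJ S j}

/-- `SRE⁻(I,S,j)`: uncertain elements whose removal is strongly `j`-relevant. -/
def SREminus {α : Type u} (I : IAF α) (S : Set α) (j : VStatus) : Set (Elem α) :=
  {e | I.isUnc e ∧ ∀ I' : IAF α, I'.PartOf (I.addE e) → ¬ I'.stableJ S j}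

/-- The `OutRel(I,S,(a,b))` predicate. -/
def OutRel {α : Type u} (I : IAF α) (S : Set α) (r : α × α) : Prop :=
  (I.minusI {r.2} \ {r.1}) ∩ I.simI S = ∅ ∧
  PosVer Sem.co
    ((I.addR {p | p ∈ I.Rq ∧ p.1 ∈ S ∧ p.2 ∈ I.minusI {r.2} \ {r.1}}).subR
      {p | p ∈ I.Rq ∧ p.1 ≠ r.1 ∧ p.2 = r.2}) S

/-! Removing the uncertain attack `(a, b)` can make a difference to the admissibility of `S` only
when `b ∈ S`, `a ∉ S`, and `S` is admissible without `(a, b)` yet does not counter-attack `a`.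
If `a` attacks or is attacked by `S` with a certain attack, then every completion in which `S` is
admissible makes `S` attack `a`, so no such situation exists. Otherwise, take any completion in
which `S` is admissible (one exists since `S` is not stable-ad) and delete all attacks between `a`
and `S`: they are all uncertain, `S` stays admissible, and adding `(a, b)` leaves `b` undefended. -/

namespace AF

variable {α : Type u} {A : Set α} {Q Q' : Set (α × α)} {S : Set α} {a b : α}

def attacksBetween (a : α) (S : Set α) : Set (α × α) :=
  {p | (p.1 = a ∧ p.2 ∈ S) ∨ (p.1 ∈ S ∧ p.2 = a)}

lemma plusSet_mono (hQ : Q ⊆ Q') : plusSet ⟨A, Q⟩ S ⊆ plusSet ⟨A, Q'⟩ S :=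
  fun _ ⟨hx, c, hc, hcx⟩ => ⟨hx, c, hc, hQ hcx⟩

lemma confFree_anti (hQ : Q ⊆ Q') (h : confFree ⟨A, Q'⟩ S) : confFree ⟨A, Q⟩ S :=
  Set.subset_eq_empty (Set.inter_subset_inter_right S (plusSet_mono hQ)) h

lemma plusSet_union_singleton (ha : a ∉ S) :
    plusSet ⟨A, Q ∪ {(a, b)}⟩ S = plusSet ⟨A, Q⟩ S := by
  refine Set.Subset.antisymm ?_ (plusSet_mono Set.subset_union_left)
  rintro x ⟨hx, c, hc, hcx | hcx⟩
  · exact ⟨hx, c, hc, hcx⟩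
  · exact absurd ((Prod.mk.inj hcx).1 ▸ hc) ha

lemma isAd_union_singleton_of_notMem (hb : b ∉ S) (h : isAd ⟨A, Q⟩ S) :
    isAd ⟨A, Q ∪ {(a, b)}⟩ S := by
  refine ⟨h.1, Set.eq_empty_of_forall_notMem ?_, fun s hs => ⟨(h.2.2 hs).1, ?_⟩⟩
  · rintro x ⟨hxS, hx, c, hc, hcx | hcx⟩
    · exact Set.eq_empty_iff_forall_notMem.mp h.2.1 x ⟨hxS, hx, c, hc, hcx⟩
    · exact hb ((Prod.mk.inj hcx).2 ▸ hxS)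
  · rintro x (hxs | hxs)
    · exact plusSet_mono Set.subset_union_left ((h.2.2 hs).2 x hxs)
    · exact absurd ((Prod.mk.inj hxs).2 ▸ hs) hb

lemma isAd_union_singleton_iff (ha : a ∉ S) (hb : b ∈ S) (h : isAd ⟨A, Q⟩ S) :
    isAd ⟨A, Q ∪ {(a, b)}⟩ S ↔ a ∈ plusSet ⟨A, Q⟩ S := by
  constructor
  · intro h'
    simpa only [plusSet_union_singleton ha] using (h'.2.2 hb).2 a (Or.inr rfl)
  · intro haS
    refine ⟨h.1, ?_, fun s hs => ⟨(h.2.2 hs).1, fun x hxs => ?_⟩⟩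
    · simpa only [confFree, plusSet_union_singleton ha] using h.2.1
    · rw [plusSet_union_singleton ha]
      rcases hxs with hxs | hxs
      · exact (h.2.2 hs).2 x hxs
      · exact (Prod.mk.inj hxs).1 ▸ haS

lemma isAd_diff_attacksBetween (ha : a ∉ S) (h : isAd ⟨A, Q⟩ S) :
    isAd ⟨A, Q \ attacksBetween a S⟩ S := by
  refine ⟨h.1, confFree_anti Set.sdiff_subset h.2.1, fun s hs => ⟨(h.2.2 hs).1, ?_⟩⟩
  rintro x ⟨hxs, hxs'⟩
  obtain ⟨hx, c, hc, hcx⟩ := (h.2.2 hs).2 x hxs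
  refine ⟨hx, c, hc, hcx, ?_⟩
  rintro (⟨rfl, -⟩ | ⟨-, rfl⟩)
  · exact ha hc
  · exact hxs' (Or.inl ⟨rfl, hs⟩)

lemma notMem_plusSet_diff_attacksBetween : a ∉ plusSet ⟨A, Q \ attacksBetween a S⟩ S :=
  fun ⟨_, _, hc, hca⟩ => hca.2 (Or.inr ⟨hc, rfl⟩)

end AF

namespace IAF

variable {α : Type u} {I I' : IAF α}

lemma WF.R_union_Rq_subset (h : I.WF) (hAt : I.Aq = ∅) : I.R ∪ I.Rq ⊆ I.A ×ˢ I.A := by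
  simpa only [hAt, Set.union_empty] using Set.union_subset h.2.2.1 h.2.2.2

lemma cert_eq (h : I.R ⊆ I.A ×ˢ I.A) : I.cert = ⟨I.A, I.R⟩ := by
  rw [cert, Set.inter_eq_left.mpr h]

lemma PartOf.A_eq (h : I'.PartOf I) (hAt : I.Aq = ∅) : I'.A = I.A :=
  Set.Subset.antisymm (by simpa only [hAt, Set.union_empty] using h.2.2.1) h.2.1

lemma PartOf.R_subset (h : I'.PartOf I) (hWF : I.WF) (hAt : I.Aq = ∅) : I.R ⊆ I'.R := by
  intro p hp
  have hpA := hWF.R_union_Rq_subset hAt (Or.inl hp)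
  exact h.2.2.2.1 ⟨hp, Or.inl (h.2.1 hpA.1), Or.inl (h.2.1 hpA.2)⟩

lemma exists_eq_of_isCompletion (hWF : I.WF) (hAt : I.Aq = ∅) {F : AF α}
    (hF : I.IsCompletion F) : ∃ Q, I.R ⊆ Q ∧ Q ⊆ I.R ∪ I.Rq ∧ F = ⟨I.A, Q⟩ := by
  obtain ⟨I', hI', rfl⟩ := hF
  refine ⟨I'.R ∩ I.A ×ˢ I.A, fun p hp => ⟨hI'.R_subset hWF hAt hp, ?_⟩,
    Set.inter_subset_left.trans hI'.2.2.2.2.1, by rw [cert, hI'.A_eq hAt]⟩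
  exact hWF.R_union_Rq_subset hAt (Or.inl hp)

lemma mem_REminus_att_iff (hWF : I.WF) (hAt : I.Aq = ∅) {S : Set α} {j : VStatus}
    {r : α × α} (hr : r ∈ I.Rq) :
    Elem.att r ∈ REminus I S j ↔ ∃ Q, I.R ⊆ Q ∧ Q ⊆ I.R ∪ I.Rq ∧ r ∉ Q ∧
      hasStatus ⟨I.A, Q⟩ S j ∧ ¬ hasStatus ⟨I.A, Q ∪ {r}⟩ S j := by
  have hQA {Q : Set (α × α)} (hQ : Q ⊆ I.R ∪ I.Rq) : Q ∪ {r} ⊆ I.A ×ˢ I.A :=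
    Set.union_subset (hQ.trans (hWF.R_union_Rq_subset hAt))
      (Set.singleton_subset_iff.mpr (hWF.R_union_Rq_subset hAt (Or.inr hr)))
  constructor
  · rintro ⟨-, I', hI', ⟨hAq', hRq'⟩, hsub, hadd⟩
    have hA := hI'.A_eq hAt
    have hR' : I'.R ∪ I'.Rq ⊆ I.A ×ˢ I.A := hA ▸ hI'.1.R_union_Rq_subset hAq'
    have hr' : r ∈ I'.Rq := hRq' ▸ rfl
    have hcert : (I'.subR {r}).cert = ⟨I.A, I'.R⟩ := by
      rw [← hA]; exact cert_eq (hA ▸ Set.subset_union_left.trans hR')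
    have hcert' : (I'.addR {r}).cert = ⟨I.A, I'.R ∪ {r}⟩ := by
      rw [← hA]
      exact cert_eq (hA ▸ Set.union_subset (Set.subset_union_left.trans hR')
        (Set.singleton_subset_iff.mpr (hR' (Or.inr hr'))))
    exact ⟨I'.R, hI'.R_subset hWF hAt, hI'.2.2.2.2.1,
      fun h => Set.disjoint_left.mp hI'.1.2.1 h hr', hcert ▸ hsub, hcert' ▸ hadd⟩
  · rintro ⟨Q, hRQ, hQR, hrQ, hsub, hadd⟩
    have hQ : Q ⊆ I.A ×ˢ I.A := Set.subset_union_left.trans (hQA hQR)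
    refine ⟨hr, ⟨I.A, ∅, Q, {r}⟩, ⟨⟨Set.disjoint_empty _, Set.disjoint_singleton_right.mpr hrQ,
      ?_, ?_⟩, subset_rfl, Set.subset_union_left, ?_, hQR, Set.empty_subset _,
      Set.singleton_subset_iff.mpr hr⟩, ⟨rfl, rfl⟩, ?_, ?_⟩
    · simpa only [Set.union_empty] using hQ
    · simpa only [Set.union_empty] using Set.union_subset_iff.mp (hQA hQR) |>.2
    · exact Set.inter_subset_left.trans hRQ
    · rwa [subE, subR, cert_eq hQ]
    · rwa [addE, addR, cert_eq (hQA hQR)]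

end IAF

theorem stmt4_general {α : Type u} (I : IAF α) (S : Set α)
    (hWF : I.WF) (hAt : I.Aq = ∅)
    (hns : ¬ I.stableSem S Sem.ad) :
    ∀ r ∈ I.Rq, (r.1 ∉ S ∨ r.2 ∉ S) →
      (Elem.att r ∈ REminus I S (Sem.ad, true) ↔
        r.1 ∉ I.minusI S ∧ r.1 ∉ I.plusI S ∧ r.2 ∈ S) := by
  rintro ⟨a, b⟩ hr hab
  have haA : a ∈ I.A := (hWF.R_union_Rq_subset hAt (Or.inr hr)).1
  rw [IAF.mem_REminus_att_iff hWF hAt hr]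
  constructor
  · rintro ⟨Q, hRQ, -, -, hQ, hQr⟩
    have hbS : b ∈ S := by_contra fun hbS => hQr (AF.isAd_union_singleton_of_notMem hbS hQ)
    have haS : a ∉ S := hab.resolve_right (not_not.mpr hbS)
    have haQ : a ∉ AF.plusSet ⟨I.A, Q⟩ S := mt (AF.isAd_union_singleton_iff haS hbS hQ).mpr hQr
    refine ⟨fun ⟨_, s, hs, has⟩ => haQ ((hQ.2.2 hs).2 a (hRQ has)),
      fun ⟨_, c, hc, hca⟩ => haQ ⟨haA, c, hc, hRQ hca⟩, hbS⟩
  · rintro ⟨hmin, hplus, hbS⟩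
    have haS : a ∉ S := hab.resolve_right (not_not.mpr hbS)
    obtain ⟨F, hF, hFS⟩ : ∃ F, I.IsCompletion F ∧ F.isAd S := by
      by_contra! h
      exact hns (Or.inr h)
    obtain ⟨Q, hRQ, hQR, rfl⟩ := I.exists_eq_of_isCompletion hWF hAt hF
    have hQ' := AF.isAd_diff_attacksBetween haS hFS
    refine ⟨Q \ AF.attacksBetween a S, fun p hp => ⟨hRQ hp, ?_⟩, Set.sdiff_subset.trans hQR,
      fun h => h.2 (Or.inl ⟨rfl, hbS⟩), hQ',
      fun h => AF.notMem_plusSet_diff_attacksBetween ((AF.isAd_union_singleton_iff haS hbS hQ').mp h)⟩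
    rintro (⟨h, hS⟩ | ⟨hS, h⟩)
    · exact hmin ⟨Or.inl haA, p.2, hS, h ▸ hp⟩
    · exact hplus ⟨Or.inl haA, p.1, hS, h ▸ hp⟩

/-- characterization of `(ad,true)`-relevance of removal in an AtIAF. -/
theorem stmt4 {α : Type u} (I : IAF α) (S : Set α)
    (hWF : I.WF) (hAt : I.Aq = ∅) (hS : S ⊆ I.A)
    (hns : ¬ I.stableSem S Sem.ad) :
    ∀ r ∈ I.Rq, (r.1 ∉ S ∨ r.2 ∉ S) →
      (Elem.att r ∈ REminus I S (Sem.ad, true) ↔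
        r.1 ∉ I.minusI S ∧ r.1 ∉ I.plusI S ∧ r.2 ∈ S) :=
  stmt4_general I S hWF hAt hns
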